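/- Let Γ be a simple graph of order n with maximum degree Δ. If Γ is partitionable into global defensive k-alliances, then ψ_k^{gd}(Γ) ≤ Δ + 1 − i(Γ) − k. -/

import Mathlib

open Finset

/-- The number of neighbors that the vertex `v` has inside the set `S`. -/
def degIn {V : Type*} [Fintype V] [DecidableEq V] (G : SimpleGraph V) [DecidableRel G.Adj]
    (S : Finset V) (v : V) : ℕ :=
  (S.filter fun u => G.Adj v u).card

/-- `S` is a defensive `k`-alliance: `S` is nonempty and every vertex of `S` has at least
`k` more neighbors inside `S` than outside. -/
def IsDefensiveAlliance {V : Type*} [Fintype V] [DecidableEq V] (G : SimpleGraph V)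
    [DecidableRel G.Adj] (k : ℤ) (S : Finset V) : Prop :=
  S.Nonempty ∧ ∀ v ∈ S, (degIn G Sᶜ v : ℤ) + k ≤ (degIn G S v : ℤ)

/-- `S` is a dominating set: every vertex outside `S` has a neighbor in `S`. -/
def IsDominatingSet {V : Type*} [Fintype V] [DecidableEq V] (G : SimpleGraph V)
    (S : Finset V) : Prop :=
  ∀ v ∉ S, ∃ u ∈ S, G.Adj v u

/-- A global defensive `k`-alliance is a defensive `k`-alliance which is a dominating set. -/
def IsGlobalDefensiveAlliance {V : Type*} [Fintype V] [DecidableEq V] (G : SimpleGraph V)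
    [DecidableRel G.Adj] (k : ℤ) (S : Finset V) : Prop :=
  IsDefensiveAlliance G k S ∧ IsDominatingSet G S

/-- The defensive `k`-alliance number: the minimum cardinality of a defensive `k`-alliance. -/
noncomputable def defAllianceNum {V : Type*} [Fintype V] [DecidableEq V] (G : SimpleGraph V)
    [DecidableRel G.Adj] (k : ℤ) : ℕ :=
  sInf {s : ℕ | ∃ S : Finset V, IsDefensiveAlliance G k S ∧ S.card = s}

/-- The global defensive `k`-alliance number. -/
noncomputable def globalDefAllianceNum {V : Type*} [Fintype V] [DecidableEq V] (G : SimpleGraph V)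
    [DecidableRel G.Adj] (k : ℤ) : ℕ :=
  sInf {s : ℕ | ∃ S : Finset V, IsGlobalDefensiveAlliance G k S ∧ S.card = s}

/-- A partition of the vertex set all whose parts are defensive `k`-alliances. -/
def IsDefAlliancePartition {V : Type*} [Fintype V] [DecidableEq V] (G : SimpleGraph V)
    [DecidableRel G.Adj] (k : ℤ) (P : Finpartition (univ : Finset V)) : Prop :=
  ∀ S ∈ P.parts, IsDefensiveAlliance G k S

/-- A partition of the vertex set all whose parts are global defensive `k`-alliances. -/
def IsGlobalDefAlliancePartition {V : Type*} [Fintype V] [DecidableEq V] (G : SimpleGraph V)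
    [DecidableRel G.Adj] (k : ℤ) (P : Finpartition (univ : Finset V)) : Prop :=
  ∀ S ∈ P.parts, IsGlobalDefensiveAlliance G k S

/-- The defensive `k`-alliance partition number `ψₖᵈ`. -/
noncomputable def defPartitionNum {V : Type*} [Fintype V] [DecidableEq V] (G : SimpleGraph V)
    [DecidableRel G.Adj] (k : ℤ) : ℕ :=
  sSup {r : ℕ | ∃ P : Finpartition (univ : Finset V),
    IsDefAlliancePartition G k P ∧ P.parts.card = r}

/-- The global defensive `k`-alliance partition number `ψₖᵍᵈ`. -/
noncomputable def globalDefPartitionNum {V : Type*} [Fintype V] [DecidableEq V]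
    (G : SimpleGraph V) [DecidableRel G.Adj] (k : ℤ) : ℕ :=
  sSup {r : ℕ | ∃ P : Finpartition (univ : Finset V),
    IsGlobalDefAlliancePartition G k P ∧ P.parts.card = r}

/-- The isoperimetric number of `G`:
`i(G) = min { (∑_{v ∈ S} δ_{S̄}(v)) / |S| : ∅ ≠ S ⊆ V, |S| ≤ n/2 }`. -/
noncomputable def isoperimetricNumber {V : Type*} [Fintype V] [DecidableEq V]
    (G : SimpleGraph V) [DecidableRel G.Adj] : ℝ :=
  sInf {x : ℝ | ∃ S : Finset V, S.Nonempty ∧ 2 * S.card ≤ Fintype.card V ∧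
    x = (∑ v ∈ S, (degIn G Sᶜ v : ℝ)) / (S.card : ℝ)}

/-! If `P` is a partition of `V` into `r ≥ 2` global defensive `k`-alliances and `S` is a
smallest part, then `2|S| ≤ n`, so `S` competes in the definition of `i(Γ)`. A vertex `v ∈ S`
has a neighbour in each of the other `r - 1` parts, since they dominate `v`; hence
`r - 1 ≤ δ_{S̄}(v)`, and combined with `δ_S(v) ≥ δ_{S̄}(v) + k` and `δ_S(v) + δ_{S̄}(v) ≤ Δ` this gives
`δ_{S̄}(v) ≤ Δ + 1 - r - k`. Averaging over `S` bounds `i(Γ)` by `Δ + 1 - r - k`. -/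

lemma Finpartition.card_parts_mul_card_le {α : Type*} [DecidableEq α] {s : Finset α}
    (P : Finpartition s) {S : Finset α} (hS : ∀ T ∈ P.parts, #S ≤ #T) :
    #P.parts * #S ≤ #s := by
  simpa [P.sum_card_parts] using card_nsmul_le_sum P.parts card #S hS

section

variable {V : Type*} [Fintype V] [DecidableEq V] (G : SimpleGraph V) [DecidableRel G.Adj]

lemma degIn_add_degIn_compl (S : Finset V) (v : V) :
    degIn G S v + degIn G Sᶜ v = G.degree v := by
  rw [degIn, degIn, ← card_union_of_disjoint (disjoint_filter_filter disjoint_compl_right),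
    ← filter_union, union_compl, ← G.card_neighborFinset_eq_degree]
  congr 1
  ext u
  simp

lemma card_parts_sub_one_le_degIn_compl {P : Finpartition (univ : Finset V)}
    (hdom : ∀ T ∈ P.parts, IsDominatingSet G T) {S : Finset V} (hS : S ∈ P.parts)
    {v : V} (hv : v ∈ S) :
    #P.parts - 1 ≤ degIn G Sᶜ v := by
  rw [← card_erase_of_mem hS, degIn]
  refine card_le_card_of_surjOn P.part fun T hT => ?_
  obtain ⟨hTS, hT⟩ := mem_erase.1 hT
  have hvT : v ∉ T := fun hvT => hTS (P.eq_of_mem_parts hT hS hvT hv)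
  obtain ⟨u, huT, hvu⟩ := hdom T hT v hvT
  have huS : u ∉ S := fun huS => hTS (P.eq_of_mem_parts hT hS huT huS)
  exact ⟨u, by simp [huS, hvu], P.part_eq_of_mem hT huT⟩

lemma degIn_compl_le_of_isGlobalDefAlliancePartition {k : ℤ}
    {P : Finpartition (univ : Finset V)} (hP : IsGlobalDefAlliancePartition G k P)
    {S : Finset V} (hS : S ∈ P.parts) {v : V} (hv : v ∈ S) :
    (degIn G Sᶜ v : ℤ) ≤ G.maxDegree + 1 - #P.parts - k := by
  have hcross := card_parts_sub_one_le_degIn_compl G (fun T hT => (hP T hT).2) hS hv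
  have halliance := (hP S hS).1.2 v hv
  have hdeg := degIn_add_degIn_compl G S v
  have hmax := G.degree_le_maxDegree v
  omega

lemma isoperimetricNumber_le {S : Finset V} (hS : S.Nonempty)
    (hcard : 2 * #S ≤ Fintype.card V) :
    isoperimetricNumber G ≤ (∑ v ∈ S, (degIn G Sᶜ v : ℝ)) / #S :=
  csInf_le ⟨0, by rintro _ ⟨T, -, -, rfl⟩; positivity⟩ ⟨S, hS, hcard, rfl⟩

lemma exists_isGlobalDefAlliancePartition_card_eq {k : ℤ} (h : 0 < globalDefPartitionNum G k) :
    ∃ P : Finpartition (univ : Finset V),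
      IsGlobalDefAlliancePartition G k P ∧ #P.parts = globalDefPartitionNum G k := by
  refine Nat.sSup_mem (s := {r | ∃ P : Finpartition (univ : Finset V),
    IsGlobalDefAlliancePartition G k P ∧ #P.parts = r})
    (Set.nonempty_iff_ne_empty.2 fun hempty => ?_) ⟨Fintype.card V, ?_⟩
  · rw [globalDefPartitionNum, hempty, csSup_empty] at h
    exact h.false
  · rintro _ ⟨P, -, rfl⟩
    simpa using P.card_parts_le_card

end

/-- If `Γ` with maximum degree `Δ` is partitionable into global defensive `k`-alliances,
then `ψₖᵍᵈ(Γ) ≤ Δ + 1 - i(Γ) - k`. -/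
theorem statement11 {V : Type*} [Fintype V] [DecidableEq V]
    (G : SimpleGraph V) [DecidableRel G.Adj] (k : ℤ)
    (hpart : 2 ≤ globalDefPartitionNum G k) :
    (globalDefPartitionNum G k : ℝ) ≤
      (G.maxDegree : ℝ) + 1 - isoperimetricNumber G - (k : ℝ) := by
  obtain ⟨P, hP, hcard⟩ := exists_isGlobalDefAlliancePartition_card_eq G (two_pos.trans_le hpart)
  rw [← hcard] at hpart ⊢
  obtain ⟨S, hS, hSmin⟩ := exists_min_image P.parts card (card_pos.1 (by omega))
  have hSne : S.Nonempty := (hP S hS).1.1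
  have hhalf : 2 * #S ≤ Fintype.card V :=
    calc 2 * #S ≤ #P.parts * #S := Nat.mul_le_mul_right _ hpart
      _ ≤ Fintype.card V := P.card_parts_mul_card_le hSmin
  have hsum : ∑ v ∈ S, (degIn G Sᶜ v : ℝ) ≤
      #S • ((G.maxDegree : ℝ) + 1 - #P.parts - k) :=
    sum_le_card_nsmul _ _ _ fun v hv => by
      exact_mod_cast degIn_compl_le_of_isGlobalDefAlliancePartition G hP hS hv
  have hratio : (∑ v ∈ S, (degIn G Sᶜ v : ℝ)) / #S ≤ G.maxDegree + 1 - #P.parts - k := by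
    rw [div_le_iff₀ (by exact_mod_cast hSne.card_pos), mul_comm, ← nsmul_eq_mul]
    exact hsum
  linarith [isoperimetricNumber_le G hSne hhalf]
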